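/- For every s ∈ ℝ and every x ∈ [0,1], the function y ↦ |g(√(is),x,y)| on [0,1] attains its maximum at y = x; that is, |g(√(is),x,y)| ≤ |g(√(is),x,x)| for all y ∈ [0,1]. -/

import Mathlib

open MeasureTheory Set Filter
open scoped Real Topology

/-- The Green's function `g(m,x,y)` for complex parameter `m`, with
`g(0,x,y)` given by the triangular kernel. -/
noncomputable def gC (m : ℂ) (x y : ℝ) : ℂ :=
  if m = 0 then
    (((if y ≤ x then (1 - x) * y else x * (1 - y)) : ℝ) : ℂ)
  else if y ≤ x then
    -(Complex.sinh (m * ((x : ℂ) - 1)) * Complex.sinh (m * (y : ℂ))) / (m * Complex.sinh m)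
  else
    -(Complex.sinh (m * (x : ℂ)) * Complex.sinh (m * ((y : ℂ) - 1))) / (m * Complex.sinh m)

/-- `√(is) = (1+i)·√|s|/√2` for real `s`. -/
noncomputable def sqrtis (s : ℝ) : ℂ :=
  (1 + Complex.I) * (Real.sqrt |s| : ℂ) / (Real.sqrt 2 : ℂ)


lemma sinh_one_add_I (u : ℝ) :
    Complex.sinh ((1 + Complex.I) * u) =
      (Real.sinh u * Real.cos u : ℝ) + (Real.cosh u * Real.sin u : ℝ) * Complex.I := by
  have : (1 + Complex.I) * u = (u : ℂ) + (u : ℂ) * Complex.I := by ring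
  rw [this, Complex.sinh_add, Complex.sinh_mul_I, Complex.cosh_mul_I]
  push_cast
  ring

lemma sq_abs_sinh (u : ℝ) :
    ‖Complex.sinh ((1 + Complex.I) * u)‖ ^ 2 =
      Real.sinh u ^ 2 + Real.sin u ^ 2 := by
  rw [sinh_one_add_I, Complex.sq_norm, Complex.normSq_add_mul_I]
  have h1 := Real.sin_sq_add_cos_sq u
  have h2 := Real.cosh_sq u
  nlinarith


lemma F_mono {a b : ℝ} (ha : 0 ≤ a) (hab : a ≤ b) :
    Real.sinh a ^ 2 + Real.sin a ^ 2 ≤ Real.sinh b ^ 2 + Real.sin b ^ 2 := by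
  have hb : 0 ≤ b := ha.trans hab
  have h1 : Real.sinh a + (b - a) ≤ Real.sinh b := by
    have h : Real.sinh b = Real.sinh a * Real.cosh (b - a) + Real.cosh a * Real.sinh (b - a) := by
      rw [← Real.sinh_add]; ring_nf
    have c1 : (1:ℝ) ≤ Real.cosh (b - a) := Real.one_le_cosh _
    have c2 : (1:ℝ) ≤ Real.cosh a := Real.one_le_cosh _
    have s1 : 0 ≤ Real.sinh a := Real.sinh_nonneg_iff.2 ha
    have s2 : b - a ≤ Real.sinh (b - a) := Real.self_le_sinh_iff.2 (by linarith)
    have s3 : 0 ≤ Real.sinh (b - a) := by linarith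
    nlinarith
  have h2 : a ≤ Real.sinh a := Real.self_le_sinh_iff.2 ha
  have h3 : b ≤ Real.sinh b := Real.self_le_sinh_iff.2 hb
  have h4 : |Real.sin a - Real.sin b| ≤ b - a := by
    have := Real.sin_sub_sin a b
    have e1 : |Real.sin ((a - b)/2)| ≤ |(a - b)/2| := Real.abs_sin_le_abs
    have e2 : |Real.cos ((a + b)/2)| ≤ 1 := Real.abs_cos_le_one _
    calc |Real.sin a - Real.sin b| = 2 * |Real.sin ((a-b)/2)| * |Real.cos ((a+b)/2)| := by
          rw [this, abs_mul, abs_mul]; simp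
      _ ≤ 2 * |(a-b)/2| * 1 := by
          apply mul_le_mul _ e2 (abs_nonneg _) (by positivity)
          exact mul_le_mul_of_nonneg_left e1 (by norm_num)
      _ = b - a := by rw [abs_div, abs_two, abs_sub_comm, abs_of_nonneg (by linarith : (0:ℝ) ≤ b - a)]; ring
  have h5 : |Real.sin a| ≤ a := (Real.abs_sin_le_abs).trans_eq (abs_of_nonneg ha)
  have h6 : |Real.sin b| ≤ b := (Real.abs_sin_le_abs).trans_eq (abs_of_nonneg hb)
  have h4a := abs_le.1 h4
  have h5a := abs_le.1 h5
  have h6a := abs_le.1 h6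
  nlinarith [h4a.1, h4a.2, h5a.1, h5a.2, h6a.1, h6a.2, sq_nonneg (Real.sin a + Real.sin b),
    sq_nonneg (Real.sin a - Real.sin b)]

lemma abs_sinh_mono {a b : ℝ} (ha : 0 ≤ a) (hab : a ≤ b) :
    ‖Complex.sinh ((1 + Complex.I) * a)‖ ≤
      ‖Complex.sinh ((1 + Complex.I) * b)‖ := by
  have h1 := sq_abs_sinh a
  have h2 := sq_abs_sinh b
  have h3 := F_mono ha hab
  nlinarith [norm_nonneg (Complex.sinh ((1 + Complex.I) * a)),
    norm_nonneg (Complex.sinh ((1 + Complex.I) * b))]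

lemma abs_sinh_pos {t : ℝ} (ht : 0 < t) :
    0 < ‖Complex.sinh ((1 + Complex.I) * t)‖ := by
  have h1 := sq_abs_sinh t
  have h2 : 0 < Real.sinh t := Real.sinh_pos_iff.2 ht
  nlinarith [norm_nonneg (Complex.sinh ((1 + Complex.I) * t)), sq_nonneg (Real.sin t)]

/-- For every `s ∈ ℝ` and `x ∈ [0,1]`, the function
`y ↦ |g(√(is),x,y)|` on `[0,1]` attains its maximum at `y = x`:
`|g(√(is),x,y)| ≤ |g(√(is),x,x)|` for all `y ∈ [0,1]`. -/
theorem gC_abs_max_on_diagonal (s : ℝ) (x : ℝ) (hx : x ∈ Set.Icc (0 : ℝ) 1)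
    (y : ℝ) (hy : y ∈ Set.Icc (0 : ℝ) 1) :
    ‖gC (sqrtis s) x y‖ ≤ ‖gC (sqrtis s) x x‖ := by
  obtain ⟨hx0, hx1⟩ := hx
  obtain ⟨hy0, hy1⟩ := hy
  by_cases hs : Real.sqrt |s| = 0
  · have hm : sqrtis s = 0 := by simp [sqrtis, hs]
    rw [hm]
    simp only [gC, if_pos rfl, if_true]
    rw [if_pos (le_refl x), Complex.norm_real, Complex.norm_real, Real.norm_eq_abs, Real.norm_eq_abs]
    split_ifs with h
    · rw [abs_of_nonneg (by nlinarith), abs_of_nonneg (by nlinarith)]; nlinarith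
    · push_neg at h
      rw [abs_of_nonneg (by nlinarith), abs_of_nonneg (by nlinarith)]; nlinarith
  · set t := Real.sqrt |s| / Real.sqrt 2 with htdef
    have ht : 0 < t :=
      div_pos (lt_of_le_of_ne (Real.sqrt_nonneg _) (Ne.symm hs)) (by positivity)
    have hm : sqrtis s = (1 + Complex.I) * ((t : ℝ) : ℂ) := by
      rw [sqrtis, htdef]; push_cast; ring
    have h1I : (1 + Complex.I) ≠ 0 := by
      intro h
      have := congrArg Complex.im h
      simp at this
    have hmne : sqrtis s ≠ 0 := by
      rw [hm]
      exact mul_ne_zero h1I (by exact_mod_cast ne_of_gt ht)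
    have hsinhne : Complex.sinh (sqrtis s) ≠ 0 := by
      rw [hm]
      intro h
      have := abs_sinh_pos ht
      rw [h] at this
      simp at this
    have hden : 0 < ‖sqrtis s * Complex.sinh (sqrtis s)‖ := by
      rw [norm_mul]
      exact mul_pos (norm_pos_iff.2 hmne) (norm_pos_iff.2 hsinhne)
    have e1 : sqrtis s * ((x : ℂ) - 1) = -((1 + Complex.I) * ((t * (1 - x) : ℝ) : ℂ)) := by
      rw [hm]; push_cast; ring
    have e2 : ∀ u : ℝ, sqrtis s * (u : ℂ) = (1 + Complex.I) * ((t * u : ℝ) : ℂ) := by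
      intro u; rw [hm]; push_cast; ring
    have e3 : sqrtis s * ((y : ℂ) - 1) = -((1 + Complex.I) * ((t * (1 - y) : ℝ) : ℂ)) := by
      rw [hm]; push_cast; ring
    rw [gC, gC, if_neg hmne, if_neg hmne, if_pos (le_refl x)]
    split_ifs with h
    · -- y ≤ x
      simp only [norm_div, norm_neg, norm_mul]
      rw [div_le_div_iff_of_pos_right (by rw [← norm_mul]; exact hden)]
      refine mul_le_mul_of_nonneg_left ?_ (norm_nonneg _)
      rw [e2 x, e2 y]
      exact abs_sinh_mono (by positivity) (by nlinarith)
    · -- x < y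
      push_neg at h
      simp only [norm_div, norm_neg, norm_mul]
      rw [div_le_div_iff_of_pos_right (by rw [← norm_mul]; exact hden),
        mul_comm (‖Complex.sinh (sqrtis s * ((x:ℂ) - 1))‖)]
      refine mul_le_mul_of_nonneg_left ?_ (norm_nonneg _)
      rw [e1, e3, Complex.sinh_neg, Complex.sinh_neg, norm_neg, norm_neg]
      exact abs_sinh_mono (by nlinarith) (by nlinarith)
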